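/- Let (X, x_0) be a based metric space and Φ a symmetric norm. Then the set S_Φ(X, x_0) of Φ-summable countable multisets in (X, x_0), with d_Φ(S, T) := inf over pairs of enumerations (s_i), (t_i) of Φ(d(s_1,t_1), d(s_2,t_2), ...), is a metric space. -/

import Mathlib

open Filter

/-- A symmetric norm: a norm on the space `c_00` of finitely supported real
sequences (modelled as `ℕ →₀ ℝ`), normalised by `Φ(1,0,0,…) = 1`, and invariant
under permutations of the entries and under replacing entries by their absolute
values. -/
structure SymmetricNorm where
  toFun : (ℕ →₀ ℝ) → ℝ
  nonneg : ∀ ξ, 0 ≤ toFun ξ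
  eq_zero : ∀ ξ, toFun ξ = 0 → ξ = 0
  add_le : ∀ ξ η, toFun (ξ + η) ≤ toFun ξ + toFun η
  smul_eq : ∀ (c : ℝ) (ξ), toFun (c • ξ) = |c| * toFun ξ
  norm_single : toFun (Finsupp.single 0 1) = 1
  perm_invariant : ∀ (π : Equiv.Perm ℕ) (ξ), toFun (Finsupp.equivMapDomain π ξ) = toFun ξ
  abs_invariant : ∀ (ξ : ℕ →₀ ℝ), toFun (Finsupp.mapRange (fun a => |a|) abs_zero ξ) = toFun ξ

/-- The truncation `(ξ_0, …, ξ_{n-1}, 0, 0, …)` of a sequence, as an element of `c_00`. -/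
noncomputable def truncF (ξ : ℕ → ℝ) (n : ℕ) : ℕ →₀ ℝ :=
  ∑ i ∈ Finset.range n, Finsupp.single i (ξ i)

/-- The extension of a symmetric norm to sequences: `Φ(ξ) = lim_n Φ(ξ_0,…,ξ_{n-1},0,0,…)`. -/
noncomputable def SymmetricNorm.ext (Φ : SymmetricNorm) (ξ : ℕ → ℝ) : ℝ :=
  limUnder atTop fun n => Φ.toFun (truncF ξ n)

/-- Membership in the natural domain `ℓ_Φ`: the sequence tends to `0` and the
`Φ`-norms of its truncations converge. -/
def MemLPhi (Φ : SymmetricNorm) (ξ : ℕ → ℝ) : Prop :=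
  Tendsto ξ atTop (nhds 0) ∧ ∃ L, Tendsto (fun n => Φ.toFun (truncF ξ n)) atTop (nhds L)

/-- Membership in `ℓ_Φ^+`: nonnegative `Φ`-summable sequences. -/
def MemLPhiPlus (Φ : SymmetricNorm) (ξ : ℕ → ℝ) : Prop :=
  (∀ i, 0 ≤ ξ i) ∧ MemLPhi Φ ξ

/-- A symmetric norm is regular if `Φ(ξ_{n+1}, ξ_{n+2}, …) → 0` for every `ξ ∈ ℓ_Φ`. -/
def SymmetricNorm.Regular (Φ : SymmetricNorm) : Prop :=
  ∀ ξ : ℕ → ℝ, MemLPhi Φ ξ →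
    Tendsto (fun n => Φ.ext fun i => ξ (n + i)) atTop (nhds 0)

/-- `partialMax ξ k` is the supremum of sums of `k` distinct entries of `ξ`;
for nonnegative `ξ ∈ c_0` this equals `ξ^↓_1 + ⋯ + ξ^↓_k`. -/
noncomputable def partialMax (ξ : ℕ → ℝ) (k : ℕ) : ℝ :=
  sSup ((fun s : Finset ℕ => ∑ i ∈ s, ξ i) '' {s | s.card = k})

/-- The nonincreasing rearrangement `ξ^↓` of a (nonnegative, null) sequence,
defined via `ξ^↓_1 = max ξ_i`, `ξ^↓_1 + ξ^↓_2 = max_{i ≠ j} (ξ_i + ξ_j)`, …. -/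
noncomputable def decRearr (ξ : ℕ → ℝ) (k : ℕ) : ℝ :=
  partialMax ξ (k + 1) - partialMax ξ k
open scoped Classical

variable {X : Type*} [MetricSpace X]

/-- `s : ℕ → X` is an enumeration of the countable multiset `S` in `(X, x₀)`:
every point other than the basepoint occurs in `s` exactly according to its
multiplicity in `S`. -/
def IsEnum (x0 : X) (S : X → ℕ∞) (s : ℕ → X) : Prop :=
  ∀ x, x ≠ x0 → S x = {i : ℕ | s i = x}.encard

/-- A countable multiset in `(X, x₀)`: a multiplicity function in which the
basepoint is the only point of infinite multiplicity and whose support is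
countable. -/
def IsCMultiset (x0 : X) (S : X → ℕ∞) : Prop :=
  S x0 = ⊤ ∧ (∀ x, x ≠ x0 → S x ≠ ⊤) ∧ {x | S x ≠ 0}.Countable

/-- Membership in `S_Φ(X, x₀)`: a countable multiset whose points `s_i` satisfy
`(d(x₀, s_i))_i ∈ ℓ_Φ`. -/
def MemSPhi (Φ : SymmetricNorm) (x0 : X) (S : X → ℕ∞) : Prop :=
  IsCMultiset x0 S ∧ ∃ s : ℕ → X, IsEnum x0 S s ∧ MemLPhi Φ fun i => dist x0 (s i)

/-- The distance `d_Φ(S, T)`: the infimum over pairs of enumerations `(s_i), (t_i)`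
of `S, T` of `Φ(d(s_1,t_1), d(s_2,t_2), …)`. -/
noncomputable def dPhi (Φ : SymmetricNorm) (x0 : X) (S T : X → ℕ∞) : ℝ :=
  sInf {r | ∃ s t : ℕ → X, IsEnum x0 S s ∧ IsEnum x0 T t ∧
    MemLPhi Φ (fun i => dist (s i) (t i)) ∧ r = Φ.ext fun i => dist (s i) (t i)}

/-- The sum of two multisets (addition of multiplicities away from the basepoint). -/
noncomputable def msum (x0 : X) (S T : X → ℕ∞) : X → ℕ∞ := fun x => if x = x0 then ⊤ else S x + T x

/-- The difference of two multisets (subtraction of multiplicities away from the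
basepoint). -/
noncomputable def mdiff (x0 : X) (S T : X → ℕ∞) : X → ℕ∞ := fun x => if x = x0 then ⊤ else S x - T x

/-- The intersection of a multiset with a subset `V ⊆ X`. -/
noncomputable def minter (x0 : X) (S : X → ℕ∞) (V : Set X) : X → ℕ∞ :=
  fun x => if x = x0 then ⊤ else if x ∈ V then S x else 0

/-- The multiset `S` has rank `n`: its total multiplicity away from the basepoint
is `n`, i.e. its non-basepoint part can be listed by a tuple of length `n`. -/
def HasRank (x0 : X) (S : X → ℕ∞) (n : ℕ) : Prop :=
  ∃ f : Fin n → X, (∀ i, f i ≠ x0) ∧ ∀ x, x ≠ x0 → S x = {i : Fin n | f i = x}.encard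

/-!
A pair of enumerations `(s, u)` of `S` and `U` is a matching of the two multisets, and `d_Φ` is
the infimum of the costs `Φ(d(s_i, u_i))` over matchings. A symmetric norm is monotone in the
absolute values of the entries and permutation invariant, so `ℓ_Φ` is stable under injective
reindexing combined with domination. Two enumerations of `U` differ by a bijection of their
non-basepoint slots; routing each `s_i` through `u_i` to its partner in a second matching
`(u', t)`, and padding with the basepoint, composes the matchings, and the triangle inequality
of `X` then gives that of `d_Φ`. For separation: if `T` has fewer copies of `x ≠ x₀` than `S`,
every matching sends some copy of `x` to a point of `T` other than `x`; the points of `T`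
accumulate only at `x₀`, so all of these lie at distance at least some `c > 0` from `x`.
-/

open Topology

namespace SymmetricNorm

variable (Φ : SymmetricNorm)

lemma toFun_zero : Φ.toFun 0 = 0 := by
  simpa using Φ.smul_eq 0 0

variable {Φ}

lemma toFun_congr_abs {ξ η : ℕ →₀ ℝ} (h : ∀ k, |ξ k| = |η k|) : Φ.toFun ξ = Φ.toFun η := by
  rw [← Φ.abs_invariant ξ, ← Φ.abs_invariant η]
  congr 1
  ext k
  exact h k

-- `η.update i a` is a convex combination of `η` and `η` with its `i`-th sign flipped.
lemma toFun_update_le (η : ℕ →₀ ℝ) (i : ℕ) {a : ℝ} (ha : |a| ≤ |η i|) :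
    Φ.toFun (η.update i a) ≤ Φ.toFun η := by
  rcases eq_or_ne (η i) 0 with h0 | h0
  · obtain rfl : a = 0 := abs_nonpos_iff.mp (by simpa [h0] using ha)
    rw [← h0, Finsupp.update_self]
  set t := a / η i
  have ht : |t| ≤ 1 := by rwa [abs_div, div_le_one (abs_pos.2 h0)]
  have hflip : Φ.toFun (η.update i (-η i)) = Φ.toFun η :=
    toFun_congr_abs fun k => by rcases eq_or_ne k i with rfl | hk <;> simp [Finsupp.update_apply, *]
  have hdecomp : η.update i a = ((1 + t) / 2) • η + ((1 - t) / 2) • η.update i (-η i) := by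
    ext k
    rcases eq_or_ne k i with rfl | hk
    · simp only [Finsupp.update_apply, if_true, Finsupp.add_apply, Finsupp.smul_apply,
        smul_eq_mul, t]
      field_simp
      ring
    · simp only [Finsupp.update_apply, hk, if_false, Finsupp.add_apply, Finsupp.smul_apply,
        smul_eq_mul]
      ring
  calc Φ.toFun (η.update i a)
      ≤ |(1 + t) / 2| * Φ.toFun η + |(1 - t) / 2| * Φ.toFun (η.update i (-η i)) := by
        rw [hdecomp, ← Φ.smul_eq, ← Φ.smul_eq]
        exact Φ.add_le _ _
    _ = Φ.toFun η := by
        rw [hflip, abs_of_nonneg (by linarith [neg_abs_le t]),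
          abs_of_nonneg (by linarith [le_abs_self t])]
        ring

lemma toFun_mono {ξ η : ℕ →₀ ℝ} (h : ∀ k, |ξ k| ≤ |η k|) : Φ.toFun ξ ≤ Φ.toFun η := by
  suffices key : ∀ (s : Finset ℕ) (η : ℕ →₀ ℝ), (∀ k, |ξ k| ≤ |η k|) → (∀ k ∉ s, ξ k = η k) →
      Φ.toFun ξ ≤ Φ.toFun η from
    key (ξ.support ∪ η.support) η h fun k hk => by
      simp only [Finset.mem_union, Finsupp.mem_support_iff, not_or, not_not] at hk
      rw [hk.1, hk.2]
  intro s
  induction s using Finset.induction_on with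
  | empty =>
    intro η _ hout
    rw [Finsupp.ext fun k => hout k (Finset.notMem_empty k)]
  | insert i s _ ih =>
    intro η h hout
    calc Φ.toFun ξ ≤ Φ.toFun (η.update i (ξ i)) := by
          refine ih _ (fun k => ?_) (fun k hk => ?_) <;> rw [Finsupp.update_apply] <;>
            split_ifs with hki
          · rw [hki]
          · exact h k
          · rw [hki]
          · exact hout k (by simp [hki, hk])
      _ ≤ Φ.toFun η := toFun_update_le η i (h i)

-- Extend `f` from the finite support of `ξ` to a permutation, then compare coordinatewise.
lemma toFun_le_of_injOn {ξ η : ℕ →₀ ℝ} {f : ℕ → ℕ} (hf : Set.InjOn f ξ.support)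
    (h : ∀ k ∈ ξ.support, |ξ k| ≤ |η (f k)|) : Φ.toFun ξ ≤ Φ.toFun η := by
  have : Finite {k | k ∈ (ξ.support : Set ℕ)} := ξ.support.finite_toSet.to_subtype
  let π : Equiv.Perm ℕ := (hf.bijOn_image.equiv f).extendSubtype
  have hπ : ∀ k ∈ ξ.support, π k = f k := fun k hk => by
    simp only [π, Equiv.extendSubtype_apply_of_mem _ k hk]
    rfl
  rw [← Φ.perm_invariant π]
  refine toFun_mono fun m => ?_
  rw [Finsupp.equivMapDomain_apply]
  by_cases hm : π.symm m ∈ ξ.support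
  · have hfm : f (π.symm m) = m := by rw [← hπ _ hm, Equiv.apply_symm_apply]
    simpa [hfm] using h _ hm
  · rw [Finsupp.notMem_support_iff.1 hm, abs_zero]
    exact abs_nonneg _

lemma toFun_single (i : ℕ) (c : ℝ) : Φ.toFun (Finsupp.single i c) = |c| := by
  have hswap : Finsupp.equivMapDomain (Equiv.swap 0 i) (Finsupp.single 0 (1 : ℝ))
      = Finsupp.single i 1 := by
    rw [Finsupp.equivMapDomain_single, Equiv.swap_apply_left]
  have hsmul : Finsupp.single i c = c • Finsupp.single i (1 : ℝ) := by
    rw [Finsupp.smul_single, smul_eq_mul, mul_one]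
  rw [hsmul, Φ.smul_eq, ← hswap, Φ.perm_invariant, Φ.norm_single, mul_one]

end SymmetricNorm

lemma truncF_apply (ξ : ℕ → ℝ) (n k : ℕ) : truncF ξ n k = if k < n then ξ k else 0 := by
  simp [truncF, Finsupp.finsetSum_apply, Finsupp.single_apply]

lemma SymmetricNorm.toFun_truncF_abs (Φ : SymmetricNorm) (ξ : ℕ → ℝ) (n : ℕ) :
    Φ.toFun (truncF (fun i => |ξ i|) n) = Φ.toFun (truncF ξ n) :=
  Φ.toFun_congr_abs fun k => by simp only [truncF_apply]; split_ifs <;> simp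

lemma SymmetricNorm.monotone_toFun_truncF (Φ : SymmetricNorm) (ξ : ℕ → ℝ) :
    Monotone fun n => Φ.toFun (truncF ξ n) := fun n m hnm =>
  Φ.toFun_mono fun k => by
    by_cases hk : k < n
    · simp [truncF_apply, hk, hk.trans_le hnm]
    · simp [truncF_apply, hk]

lemma mem_support_truncF {ξ : ℕ → ℝ} {n k : ℕ} : k ∈ (truncF ξ n).support ↔ k < n ∧ ξ k ≠ 0 := by
  simp [truncF_apply]

namespace MemLPhi

variable {Φ : SymmetricNorm} {ξ η ζ : ℕ → ℝ}

lemma tendsto_ext (h : MemLPhi Φ ξ) :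
    Tendsto (fun n => Φ.toFun (truncF ξ n)) atTop (𝓝 (Φ.ext ξ)) := by
  obtain ⟨-, L, hL⟩ := h
  rwa [SymmetricNorm.ext, hL.limUnder_eq]

lemma toFun_truncF_le_ext (h : MemLPhi Φ ξ) (n : ℕ) : Φ.toFun (truncF ξ n) ≤ Φ.ext ξ :=
  (Φ.monotone_toFun_truncF ξ).ge_of_tendsto h.tendsto_ext n

lemma ext_nonneg (h : MemLPhi Φ ξ) : 0 ≤ Φ.ext ξ :=
  ge_of_tendsto' h.tendsto_ext fun _ => Φ.nonneg _

lemma abs_le_ext (h : MemLPhi Φ ξ) (i : ℕ) : |ξ i| ≤ Φ.ext ξ := by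
  rw [← Φ.toFun_single i]
  refine le_trans (Φ.toFun_mono fun k => ?_) (h.toFun_truncF_le_ext (i + 1))
  rcases eq_or_ne i k with rfl | hik
  · simp [truncF_apply]
  · simp [hik]

lemma of_toFun_truncF_le {C : ℝ} (h0 : Tendsto ξ atTop (𝓝 0))
    (hC : ∀ n, Φ.toFun (truncF ξ n) ≤ C) : MemLPhi Φ ξ ∧ Φ.ext ξ ≤ C := by
  have hbdd : BddAbove (Set.range fun n => Φ.toFun (truncF ξ n)) :=
    ⟨C, by rintro _ ⟨n, rfl⟩; exact hC n⟩
  have hlim := tendsto_atTop_ciSup (Φ.monotone_toFun_truncF ξ) hbdd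
  refine ⟨⟨h0, _, hlim⟩, ?_⟩
  rw [SymmetricNorm.ext, hlim.limUnder_eq]
  exact ciSup_le hC

lemma of_injOn_le (hξ : MemLPhi Φ ξ) {f : ℕ → ℕ} (hf : Set.InjOn f {n | η n ≠ 0})
    (h : ∀ n, |η n| ≤ |ξ (f n)|) : MemLPhi Φ η ∧ Φ.ext η ≤ Φ.ext ξ := by
  have hη0 : Tendsto η atTop (𝓝 0) := by
    have hξ0 := hξ.1
    rw [← Nat.cofinite_eq_atTop, tendsto_zero_iff_norm_tendsto_zero] at hξ0 ⊢
    rw [Metric.tendsto_nhds] at hξ0 ⊢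
    intro ε hε
    have hfin := eventually_cofinite.1 (hξ0 ε hε)
    refine eventually_cofinite.2 (Set.Finite.of_finite_image (hfin.subset ?_) (hf.mono ?_))
    · rintro _ ⟨n, hn, rfl⟩
      simp only [Set.mem_ofPred_eq, Real.dist_eq, sub_zero, Real.norm_eq_abs, not_lt,
        abs_abs] at hn ⊢
      exact hn.trans (h n)
    · intro n hn
      simp only [Set.mem_ofPred_eq, Real.dist_eq, sub_zero, Real.norm_eq_abs, not_lt,
        abs_abs] at hn ⊢
      exact abs_pos.1 (hε.trans_le hn)
  refine of_toFun_truncF_le hη0 fun n => ?_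
  set m := (Finset.range n).sup f + 1
  refine le_trans (Φ.toFun_le_of_injOn (f := f) (hf.mono fun k hk => ?_) fun k hk => ?_)
    (hξ.toFun_truncF_le_ext m)
  · exact (mem_support_truncF.1 hk).2
  · have hkn := (mem_support_truncF.1 hk).1
    have hfk : f k < m := Nat.lt_succ_of_le (Finset.le_sup (Finset.mem_range.2 hkn))
    simpa [truncF_apply, hkn, hfk] using h k

lemma of_abs_le_add (hξ : MemLPhi Φ ξ) (hη : MemLPhi Φ η) (h : ∀ i, |ζ i| ≤ |ξ i| + |η i|) :
    MemLPhi Φ ζ ∧ Φ.ext ζ ≤ Φ.ext ξ + Φ.ext η := by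
  have hζ0 : Tendsto ζ atTop (𝓝 0) :=
    squeeze_zero_norm h (by simpa using hξ.1.abs.add hη.1.abs)
  refine of_toFun_truncF_le hζ0 fun n => ?_
  calc Φ.toFun (truncF ζ n)
      ≤ Φ.toFun (truncF (fun i => |ξ i|) n + truncF (fun i => |η i|) n) :=
        Φ.toFun_mono fun k => by
          simp only [Finsupp.add_apply, truncF_apply]
          split_ifs
          · exact (h k).trans (le_abs_self _)
          · simp
    _ ≤ Φ.toFun (truncF ξ n) + Φ.toFun (truncF η n) := by
        rw [← Φ.toFun_truncF_abs ξ, ← Φ.toFun_truncF_abs η]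
        exact Φ.add_le _ _
    _ ≤ Φ.ext ξ + Φ.ext η := add_le_add (hξ.toFun_truncF_le_ext n) (hη.toFun_truncF_le_ext n)

end MemLPhi

universe u

lemma exists_equiv_apply_eq_of_encard_fiber_eq {ι κ : Type u} {Y : Type*} [Countable ι]
    [Countable κ] {f : ι → Y} {g : κ → Y}
    (h : ∀ y, {i | f i = y}.encard = {j | g j = y}.encard) : ∃ e : ι ≃ κ, ∀ i, g (e i) = f i := by
  have hfib : ∀ y, Nonempty ({i // f i = y} ≃ {j // g j = y}) := fun y =>
    Cardinal.eq.1 <| (Cardinal.toENat_eq_iff_of_le_aleph0 Cardinal.mk_le_aleph0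
      Cardinal.mk_le_aleph0).1 (h y)
  exact ⟨Equiv.ofFiberEquiv fun y => (hfib y).some, Equiv.ofFiberEquiv_map _⟩

lemma encard_setOf_comp_natSumNatEquivNat_symm {Y : Type*} (v : ℕ ⊕ ℕ → Y) (y : Y) :
    {n | v (Equiv.natSumNatEquivNat.symm n) = y}.encard
      = {i | v (.inl i) = y}.encard + {j | v (.inr j) = y}.encard :=
  (ENat.card_congr <| (Equiv.natSumNatEquivNat.symm.subtypeEquiv fun _ => Iff.rfl).trans
    (Equiv.subtypeSum (p := fun p => v p = y))).trans (ENat.card_sum _ _)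

section IsEnum

variable {Y : Type*} {y0 : Y} {T U : Y → ℕ∞}

lemma IsEnum.ne_zero {t : ℕ → Y} (ht : IsEnum y0 T t) (h0 : T y0 ≠ 0) (j : ℕ) : T (t j) ≠ 0 := by
  by_cases hj : t j = y0
  · rwa [hj]
  · rw [ht _ hj, Set.encard_ne_zero]
    exact ⟨j, rfl⟩

lemma IsEnum.exists_bijOn {u u' : ℕ → Y} (hu : IsEnum y0 U u) (hu' : IsEnum y0 U u') :
    ∃ σ : ℕ → ℕ, Set.BijOn σ {i | u i ≠ y0} {j | u' j ≠ y0} ∧ ∀ i, u i ≠ y0 → u' (σ i) = u i := by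
  have hfib : ∀ (v : ℕ → Y) (y : Y), y ≠ y0 →
      {a : {i // v i ≠ y0} | v a = y}.encard = {i | v i = y}.encard := fun v y hy =>
    Set.encard_preimage_of_injective_subset_range Subtype.val_injective
      fun i (hi : v i = y) => ⟨⟨i, hi ▸ hy⟩, rfl⟩
  have hempty : ∀ v : ℕ → Y, {a : {i // v i ≠ y0} | v a = y0} = ∅ := fun v =>
    Set.eq_empty_of_forall_notMem fun a => a.2
  obtain ⟨e, he⟩ := exists_equiv_apply_eq_of_encard_fiber_eq
    (f := fun a : {i // u i ≠ y0} => u a) (g := fun b : {j // u' j ≠ y0} => u' b) fun y => by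
      rcases eq_or_ne y y0 with rfl | hy
      · rw [hempty u, hempty u', Set.encard_empty, Set.encard_empty]
      · rw [hfib u y hy, hfib u' y hy, ← hu y hy, ← hu' y hy]
  set σ : ℕ → ℕ := fun i => if h : u i ≠ y0 then e ⟨i, h⟩ else 0
  have hσ : ∀ i (hi : u i ≠ y0), σ i = e ⟨i, hi⟩ := fun i hi => dif_pos hi
  refine ⟨σ, ⟨fun i hi => ?_, fun i hi i' hi' hii' => ?_, fun j hj => ?_⟩, fun i hi => ?_⟩
  · rw [hσ i hi]
    exact (e _).2
  · rw [hσ i hi, hσ i' hi'] at hii'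
    exact congrArg Subtype.val (e.injective (Subtype.ext hii'))
  · refine ⟨e.symm ⟨j, hj⟩, (e.symm ⟨j, hj⟩).2, ?_⟩
    simp [hσ _ (e.symm ⟨j, hj⟩).2]
  · rw [hσ i hi]
    exact he _

end IsEnum

section Transport

variable {Y : Type*} {y0 : Y}

noncomputable def padWithBase (y0 : Y) (s : ℕ → Y) : ℕ → Y :=
  Sum.elim s (fun _ => y0) ∘ Equiv.natSumNatEquivNat.symm

/-- Placed against `padWithBase y0 u`, this realigns the enumeration `t`, matched with `u'`, along
a bijection `σ` of non-basepoint slots with `u' ∘ σ = u`: slot `inl i` receives the partner of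
`u i`, and slot `inr j` receives `t j` whenever `u' j` is the basepoint. -/
noncomputable def transportAlong (y0 : Y) (u u' t : ℕ → Y) (σ : ℕ → ℕ) : ℕ → Y :=
  Sum.elim (fun i => if u i = y0 then y0 else t (σ i)) (fun j => if u' j = y0 then t j else y0) ∘
    Equiv.natSumNatEquivNat.symm

lemma isEnum_padWithBase {S : Y → ℕ∞} {s : ℕ → Y} (hs : IsEnum y0 S s) :
    IsEnum y0 S (padWithBase y0 s) := by
  intro x hx
  simp only [padWithBase, Function.comp_apply]
  rw [encard_setOf_comp_natSumNatEquivNat_symm]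
  simp [hs x hx, Ne.symm hx]

lemma isEnum_transportAlong {T : Y → ℕ∞} {u u' t : ℕ → Y} {σ : ℕ → ℕ} (ht : IsEnum y0 T t)
    (hσ : Set.BijOn σ {i | u i ≠ y0} {j | u' j ≠ y0}) :
    IsEnum y0 T (transportAlong y0 u u' t σ) := by
  intro x hx
  have hinl : {i | (if u i = y0 then y0 else t (σ i)) = x}
      = {i | u i ≠ y0} ∩ σ ⁻¹' {j | t j = x} := by
    ext i
    by_cases hi : u i = y0 <;> simp [hi, Ne.symm hx]
  have hinr : {j | (if u' j = y0 then t j else y0) = x} = {j | t j = x} \ {j | u' j ≠ y0} := by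
    ext j
    by_cases hj : u' j = y0 <;> simp [hj, Ne.symm hx]
  have hcard : ({i | u i ≠ y0} ∩ σ ⁻¹' {j | t j = x}).encard
      = ({j | t j = x} ∩ {j | u' j ≠ y0}).encard := by
    rw [← (hσ.injOn.mono Set.inter_subset_left).encard_image, Set.image_inter_preimage,
      hσ.image_eq, Set.inter_comm]
  simp only [transportAlong, Function.comp_apply]
  rw [encard_setOf_comp_natSumNatEquivNat_symm]
  simp only [Sum.elim_inl, Sum.elim_inr]
  rw [hinl, hinr, hcard, add_comm, Set.encard_sdiff_add_encard_inter, ht x hx]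

variable {Φ : SymmetricNorm} {x0 : X}

lemma MemLPhi.dist_padWithBase {s u : ℕ → X} (h : MemLPhi Φ fun i => dist (s i) (u i)) :
    MemLPhi Φ (fun n => dist (padWithBase x0 s n) (padWithBase x0 u n)) ∧
      Φ.ext (fun n => dist (padWithBase x0 s n) (padWithBase x0 u n))
        ≤ Φ.ext fun i => dist (s i) (u i) := by
  have hinj : Set.InjOn (Sum.elim id fun _ => 0 : ℕ ⊕ ℕ → ℕ) (Set.range Sum.inl) := by
    rintro _ ⟨i, rfl⟩ _ ⟨i', rfl⟩ h
    simpa using h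
  refine h.of_injOn_le (hinj.comp Equiv.natSumNatEquivNat.symm.injective.injOn fun n hn => ?_)
    fun n => ?_ <;>
  rcases hn' : Equiv.natSumNatEquivNat.symm n with i | j <;>
  simp_all [padWithBase]

lemma MemLPhi.dist_transportAlong {u u' t : ℕ → X} {σ : ℕ → ℕ}
    (hσ : Set.BijOn σ {i | u i ≠ x0} {j | u' j ≠ x0}) (hσu : ∀ i, u i ≠ x0 → u' (σ i) = u i)
    (h : MemLPhi Φ fun j => dist (u' j) (t j)) :
    MemLPhi Φ (fun n => dist (padWithBase x0 u n) (transportAlong x0 u u' t σ n)) ∧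
      Φ.ext (fun n => dist (padWithBase x0 u n) (transportAlong x0 u u' t σ n))
        ≤ Φ.ext fun j => dist (u' j) (t j) := by
  -- `σ` maps the left slots into `{u' ≠ x0}`, away from the right slots in `{u' = x0}`
  have hinj : Set.InjOn (Sum.elim σ id)
      {p | Sum.elim (fun i => u i ≠ x0) (fun j => u' j = x0) p} := by
    rintro (i | j) hp (i' | j') hp' h <;> simp only [Set.mem_ofPred_eq, Sum.elim_inl,
      Sum.elim_inr, id] at hp hp' h
    · rw [hσ.injOn hp hp' h]
    · exact absurd (h ▸ hp') (hσ.mapsTo hp)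
    · exact absurd (h ▸ hp) (hσ.mapsTo hp')
    · rw [h]
  refine h.of_injOn_le (hinj.comp Equiv.natSumNatEquivNat.symm.injective.injOn fun n hn => ?_)
    fun n => ?_
  · rcases hn' : Equiv.natSumNatEquivNat.symm n with i | j <;>
      simp only [Set.mem_ofPred_eq, padWithBase, transportAlong, Function.comp_apply, hn',
        Sum.elim_inl, Sum.elim_inr] at hn ⊢ <;>
      split_ifs at hn <;> simp_all
  · rcases hn' : Equiv.natSumNatEquivNat.symm n with i | j <;>
      simp only [padWithBase, transportAlong, Function.comp_apply, hn', Sum.elim_inl,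
        Sum.elim_inr, id] <;>
      split_ifs <;> simp_all

end Transport

section DPhi

variable {Φ : SymmetricNorm} {x0 : X} {S U T : X → ℕ∞}

lemma exists_isEnum_ext_dist_le_add {s u u' t : ℕ → X} (hs : IsEnum x0 S s) (hu : IsEnum x0 U u)
    (hu' : IsEnum x0 U u') (ht : IsEnum x0 T t) (hsu : MemLPhi Φ fun i => dist (s i) (u i))
    (hut : MemLPhi Φ fun j => dist (u' j) (t j)) :
    ∃ a c : ℕ → X, IsEnum x0 S a ∧ IsEnum x0 T c ∧ MemLPhi Φ (fun n => dist (a n) (c n)) ∧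
      Φ.ext (fun n => dist (a n) (c n))
        ≤ Φ.ext (fun i => dist (s i) (u i)) + Φ.ext (fun j => dist (u' j) (t j)) := by
  obtain ⟨σ, hσ, hσu⟩ := hu.exists_bijOn hu'
  obtain ⟨h₁, hle₁⟩ := hsu.dist_padWithBase (x0 := x0)
  obtain ⟨h₂, hle₂⟩ := hut.dist_transportAlong hσ hσu
  obtain ⟨h, hle⟩ := h₁.of_abs_le_add h₂
    (ζ := fun n => dist (padWithBase x0 s n) (transportAlong x0 u u' t σ n)) fun n => by
    simpa only [abs_dist] using dist_triangle _ _ _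
  exact ⟨_, _, isEnum_padWithBase hs, isEnum_transportAlong ht hσ, h,
    hle.trans (add_le_add hle₁ hle₂)⟩

lemma dPhi_le {s t : ℕ → X} (hs : IsEnum x0 S s) (ht : IsEnum x0 T t)
    (h : MemLPhi Φ fun i => dist (s i) (t i)) :
    dPhi Φ x0 S T ≤ Φ.ext fun i => dist (s i) (t i) :=
  csInf_le ⟨0, by rintro _ ⟨s, t, -, -, h, rfl⟩; exact h.ext_nonneg⟩ ⟨s, t, hs, ht, h, rfl⟩

lemma le_dPhi {c : ℝ} (hS : MemSPhi Φ x0 S) (hT : MemSPhi Φ x0 T)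
    (h : ∀ s t : ℕ → X, IsEnum x0 S s → IsEnum x0 T t → MemLPhi Φ (fun i => dist (s i) (t i)) →
      c ≤ Φ.ext fun i => dist (s i) (t i)) :
    c ≤ dPhi Φ x0 S T := by
  obtain ⟨s, hs, hs0⟩ := hS.2
  obtain ⟨t, ht, ht0⟩ := hT.2
  have hst := (hs0.of_abs_le_add ht0 (ζ := fun i => dist (s i) (t i)) fun i => by
    simpa only [abs_dist, dist_comm x0] using dist_triangle (s i) x0 (t i)).1
  exact le_csInf ⟨_, s, t, hs, ht, hst, rfl⟩ fun _ ⟨s, t, hs, ht, hst, hr⟩ => hr ▸ h s t hs ht hst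

lemma dPhi_self (hS : MemSPhi Φ x0 S) : dPhi Φ x0 S S = 0 := by
  obtain ⟨s, hs, -⟩ := hS.2
  obtain ⟨h, hle⟩ : MemLPhi Φ (fun i => dist (s i) (s i)) ∧
      Φ.ext (fun i => dist (s i) (s i)) ≤ 0 :=
    MemLPhi.of_toFun_truncF_le (by simp) fun n => by simp [truncF, Φ.toFun_zero]
  exact le_antisymm ((dPhi_le hs hs h).trans hle)
    (le_dPhi hS hS fun _ _ _ _ h => h.ext_nonneg)

lemma dPhi_comm (S T : X → ℕ∞) : dPhi Φ x0 S T = dPhi Φ x0 T S := by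
  unfold dPhi
  congr 1
  ext r
  constructor <;>
  · rintro ⟨s, t, hs, ht, h, rfl⟩
    exact ⟨t, s, ht, hs, by simpa only [dist_comm] using h, by simp only [dist_comm]⟩

lemma dPhi_triangle (hS : MemSPhi Φ x0 S) (hU : MemSPhi Φ x0 U) (hT : MemSPhi Φ x0 T) :
    dPhi Φ x0 S T ≤ dPhi Φ x0 S U + dPhi Φ x0 U T := by
  rw [← sub_le_iff_le_add]
  refine le_dPhi hS hU fun s u hs hu hsu => ?_
  rw [sub_le_iff_le_add, ← sub_le_iff_le_add']
  refine le_dPhi hU hT fun u' t hu' ht hut => ?_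
  obtain ⟨a, c, ha, hc, hac, hle⟩ := exists_isEnum_ext_dist_le_add hs hu hu' ht hsu hut
  linarith [dPhi_le ha hc hac]

end DPhi

section Separation

variable {Φ : SymmetricNorm} {x0 : X} {S T : X → ℕ∞}

lemma MemSPhi.exists_pos_le_dist (hT : MemSPhi Φ x0 T) {x : X} (hx : x ≠ x0) :
    ∃ c > 0, ∀ y, T y ≠ 0 → y ≠ x → c ≤ dist x y := by
  obtain ⟨t, ht, ht0, -⟩ := hT.2
  have htx0 : Tendsto t atTop (𝓝 x0) :=
    tendsto_iff_dist_tendsto_zero.2 (by simpa only [dist_comm] using ht0)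
  let g : ℕ → ℝ := fun i => if t i = x then dist x x0 else dist x (t i)
  have hg : Tendsto g atTop (𝓝 (dist x x0)) :=
    (tendsto_const_nhds.dist htx0).congr' <|
      (htx0.eventually_ne hx.symm).mono fun i hi => (if_neg hi).symm
  -- the values of `g` together with its limit form a compact set of positive reals
  obtain ⟨c, hcK, hcmin⟩ := hg.isCompact_insert_range.exists_isLeast (Set.insert_nonempty _ _)
  have hpos : ∀ r ∈ insert (dist x x0) (Set.range g), 0 < r := by
    rintro r (rfl | ⟨i, rfl⟩)
    · exact dist_pos.2 hx
    · by_cases hi : t i = x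
      · simpa [g, hi] using dist_pos.2 hx
      · simpa [g, hi] using dist_pos.2 (Ne.symm hi)
  refine ⟨c, hpos c hcK, fun y hy hyx => ?_⟩
  by_cases hy0 : y = x0
  · exact hy0 ▸ hcmin (Set.mem_insert _ _)
  · obtain ⟨i, rfl⟩ : ∃ i, t i = y := by
      rwa [ht y hy0, Set.encard_ne_zero] at hy
    simpa [g, hyx] using hcmin (Set.mem_insert_of_mem _ ⟨i, rfl⟩)

lemma dPhi_pos_of_lt (hS : MemSPhi Φ x0 S) (hT : MemSPhi Φ x0 T) {x : X} (hx : x ≠ x0)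
    (hlt : T x < S x) : 0 < dPhi Φ x0 S T := by
  obtain ⟨c, hc, hcle⟩ := hT.exists_pos_le_dist hx
  refine hc.trans_le (le_dPhi hS hT fun s t hs ht hst => ?_)
  obtain ⟨i, rfl, hti⟩ : ∃ i, s i = x ∧ t i ≠ x := by
    by_contra! h
    exact hlt.not_ge (by rw [hs _ hx, ht _ hx]; exact Set.encard_le_encard h)
  calc c ≤ dist (s i) (t i) := hcle _ (ht.ne_zero (by simp [hT.1.1]) i) hti
    _ ≤ Φ.ext fun i => dist (s i) (t i) := (le_abs_self _).trans (hst.abs_le_ext i)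

lemma eq_of_dPhi_eq_zero (hS : MemSPhi Φ x0 S) (hT : MemSPhi Φ x0 T) (h : dPhi Φ x0 S T = 0) :
    S = T := by
  funext x
  rcases eq_or_ne x x0 with rfl | hx
  · rw [hS.1.1, hT.1.1]
  refine le_antisymm (not_lt.1 fun hlt => ?_) (not_lt.1 fun hlt => ?_)
  · exact (dPhi_pos_of_lt hS hT hx hlt).ne' h
  · exact (dPhi_pos_of_lt hT hS hx hlt).ne' (by rwa [dPhi_comm])

end Separation

/-- The set `S_Φ(X, x₀)` of `Φ`-summable countable multisets in a based metric
space `(X, x₀)`, equipped with `d_Φ`, is a metric space. -/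
theorem sPhi_metricSpace (x0 : X) (Φ : SymmetricNorm) :
    ∃ m : MetricSpace {S : X → ℕ∞ // MemSPhi Φ x0 S},
      ∀ S T : {S : X → ℕ∞ // MemSPhi Φ x0 S}, m.dist S T = dPhi Φ x0 S.1 T.1 :=
  ⟨{ dist := fun S T => dPhi Φ x0 S.1 T.1
     dist_self := fun S => dPhi_self S.2
     dist_comm := fun S T => dPhi_comm S.1 T.1
     dist_triangle := fun S U T => dPhi_triangle S.2 U.2 T.2
     eq_of_dist_eq_zero := fun {S T} h => Subtype.ext (eq_of_dPhi_eq_zero S.2 T.2 h) },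
    fun _ _ => rfl⟩
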